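/- arXiv:2401.08188 — 9 statements merged into one kernel-verified Lean document; each statement's English description precedes it below -/
import Mathlib

section
/- Let α ≥ 0, β > 0, r > 1, R > 0, and let χ* be defined as in the context. Suppose 0 < χ < χ* and λ > 1 satisfies λχ < χ*. For M > 0 define θ₁(τ) = (1+τM)(R⁻¹ − λχτ) and θ₂(τ) = (1+τM)(η_M⁻¹ − λχτ) for τ ≥ 0. Then there exists M > 0 such that θ₁'(0) = M/R − λχ > 0 and θ₂'(0) = M/η_M − λχ > 0; consequently there exists τ* > 0 such that θ₁(t) ≥ θ₁(0) = R⁻¹ and θ₂(t) ≥ θ₂(0) = η_M⁻¹ for all t ∈ (0, τ*). -/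
open Real Set

/-- `η_M = ((α+M)/β)^{1/(r-1)}`. -/
noncomputable def etaM (α β r M : ℝ) : ℝ := ((α + M) / β) ^ (1 / (r - 1))

/-- The threshold `χ*` from the paper, as an extended real number. -/
noncomputable def chiStar (α β r R : ℝ) : EReal :=
  if 2 < r then ⊤
  else if r = 2 then (β : EReal)
  else if (α / (β * (2 - r))) ^ (1 / (r - 1)) < R then
    ((R⁻¹ * (β * R ^ (r - 1) - α) : ℝ) : EReal)
  else
    ((α ^ ((2 - r) / (1 - r)) * β ^ (1 / (r - 1)) * (2 - r) ^ ((2 - r) / (r - 1)) * (r - 1) : ℝ) :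
      EReal)

/-!
Parametrise `M` by `η = η_M`, i.e. `M = β η^{r-1} - α`. Both derivatives `θ₁'(0)`, `θ₂'(0)` are
positive exactly when `λχ · max R η < β η^{r-1} - α`, so it suffices to find such an `η > 0`.
For `r > 2`, and for `r = 2` with `λχ < β`, the right-hand side outgrows `λχ η` and any large `η`
works. For `r < 2` the slope `(β η^{r-1} - α)/η` is maximal at
`η₀ = (α/(β(2-r)))^{1/(r-1)}` with maximum the second formula for `χ*`; one takes `η = R` when
`R > η₀` and `η = η₀` otherwise. Finally `θ(τ) - θ(0) = τ (θ'(0) - λχ M τ)` is positive for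
small `τ > 0`.
-/

open Filter Topology

/-- The value of `M` for which `etaM α β r M = η`. -/
noncomputable def mOfEta (α β r η : ℝ) : ℝ := β * η ^ (r - 1) - α

noncomputable def criticalEta (α β r : ℝ) : ℝ := (α / (β * (2 - r))) ^ (1 / (r - 1))

section Theta

variable (M c L : ℝ)

theorem hasDerivAt_theta :
    HasDerivAt (fun τ : ℝ => (1 + τ * M) * (c - L * τ)) (M * c - L) 0 := by
  have h₁ : HasDerivAt (fun τ : ℝ => 1 + τ * M) M 0 := by
    simpa using ((hasDerivAt_id (0 : ℝ)).mul_const M).const_add 1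
  have h₂ : HasDerivAt (fun τ : ℝ => c - L * τ) (-L) 0 := by
    simpa using ((hasDerivAt_id (0 : ℝ)).const_mul L).const_sub c
  exact (h₁.mul h₂).congr_deriv (by ring)

variable {M c L}

theorem eventually_le_theta (h : L < M * c) :
    ∀ᶠ t in 𝓝[>] (0 : ℝ), c ≤ (1 + t * M) * (c - L * t) := by
  have hcont : Tendsto (fun t : ℝ => M * c - L - L * M * t) (𝓝 0) (𝓝 (M * c - L)) := by
    have : Continuous (fun t : ℝ => M * c - L - L * M * t) := by fun_prop
    simpa using this.tendsto 0
  have hpos := (hcont.eventually_const_lt (sub_pos.mpr h))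
  filter_upwards [nhdsWithin_le_nhds hpos, self_mem_nhdsWithin] with t ht (ht₀ : 0 < t)
  nlinarith [mul_pos ht₀ ht]

end Theta

section Eta

variable {α β r : ℝ}

theorem etaM_mOfEta {η : ℝ} (hβ : 0 < β) (hr : 1 < r) (hη : 0 < η) :
    etaM α β r (mOfEta α β r η) = η := by
  rw [etaM, mOfEta, add_sub_cancel, mul_div_cancel_left₀ _ hβ.ne', one_div]
  exact rpow_rpow_inv hη.le (sub_pos.mpr hr).ne'

theorem exists_eta_of_eventually_le {R L c : ℝ} (hL : 0 ≤ L) (hc : 0 < c)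
    (h : ∀ᶠ η in atTop, L + c ≤ β * η ^ (r - 2)) :
    ∃ η, 0 < η ∧ L * R < mOfEta α β r η ∧ L * η < mOfEta α β r η := by
  obtain ⟨η, hle, hη, hbig⟩ :=
    (h.and ((eventually_gt_atTop 0).and (eventually_gt_atTop ((α + |L * R|) / c)))).exists
  have hpow : η ^ (r - 1) = η ^ (r - 2) * η := by
    rw [← rpow_add_one hη.ne']
    ring_nf
  have hM : L * η + |L * R| < mOfEta α β r η := by
    rw [mOfEta, hpow, ← mul_assoc]
    rw [div_lt_iff₀ hc] at hbig
    nlinarith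
  exact ⟨η, hη, by nlinarith [le_abs_self (L * R)], by linarith [abs_nonneg (L * R)]⟩

theorem mOfEta_criticalEta (hα : 0 ≤ α) (hβ : 0 < β) (hr : 1 < r) (hr₂ : r < 2) :
    mOfEta α β r (criticalEta α β r) = α * (r - 1) / (2 - r) := by
  have h₂ : (2 - r) ≠ 0 := (sub_pos.mpr hr₂).ne'
  rw [mOfEta, criticalEta, one_div,
    rpow_inv_rpow (by have := sub_pos.mpr hr₂; positivity) (sub_pos.mpr hr).ne']
  field_simp
  ring

theorem rpow_formula_eq_slope_criticalEta (hα : 0 < α) (hβ : 0 < β) (hr : 1 < r) (hr₂ : r < 2) :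
    α ^ ((2 - r) / (1 - r)) * β ^ (1 / (r - 1)) * (2 - r) ^ ((2 - r) / (r - 1)) * (r - 1) =
      mOfEta α β r (criticalEta α β r) / criticalEta α β r := by
  have hc : (0 : ℝ) < 2 - r := sub_pos.mpr hr₂
  have e₁ : (2 - r) / (1 - r) = 1 - 1 / (r - 1) := by
    field_simp [(sub_pos.mpr hr).ne', (sub_neg.mpr hr).ne]
    ring
  have e₂ : (2 - r) / (r - 1) = 1 / (r - 1) - 1 := by
    field_simp [(sub_pos.mpr hr).ne']
    ring
  rw [mOfEta_criticalEta hα.le hβ hr hr₂, e₁, e₂, rpow_sub hα, rpow_sub hc, rpow_one, rpow_one,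
    criticalEta, div_rpow hα.le (by positivity), mul_rpow hβ.le hc.le]
  field_simp

theorem exists_eta_of_lt_chiStar {R L : ℝ} (hα : 0 ≤ α) (hβ : 0 < β) (hr : 1 < r) (hR : 0 < R)
    (hL : 0 ≤ L)
    (hLχ : (L : EReal) < chiStar α β r R) :
    ∃ η, 0 < η ∧ L * R < mOfEta α β r η ∧ L * η < mOfEta α β r η := by
  unfold chiStar at hLχ
  split_ifs at hLχ with h₂ hr₂ hbig
  · refine exists_eta_of_eventually_le hL one_pos ?_
    exact ((tendsto_rpow_atTop (sub_pos.mpr h₂)).const_mul_atTop hβ).eventually_ge_atTop _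
  · subst hr₂
    rw [EReal.coe_lt_coe_iff] at hLχ
    refine exists_eta_of_eventually_le hL (sub_pos.mpr hLχ) (Eventually.of_forall fun η => ?_)
    simp
  · rw [EReal.coe_lt_coe_iff, inv_mul_eq_div, lt_div_iff₀ hR] at hLχ
    exact ⟨R, hR, hLχ, hLχ⟩
  · have hr₂' : r < 2 := lt_of_le_of_ne (not_lt.mp h₂) hr₂
    have hle : R ≤ criticalEta α β r := not_lt.mp hbig
    have hα₀ : 0 < α := by
      refine lt_of_le_of_ne hα fun h => hbig ?_
      rw [← h, zero_div, zero_rpow (one_div_ne_zero (sub_pos.mpr hr).ne')]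
      exact hR
    have hη : 0 < criticalEta α β r :=
      rpow_pos_of_pos (div_pos hα₀ (mul_pos hβ (sub_pos.mpr hr₂'))) _
    rw [EReal.coe_lt_coe_iff, rpow_formula_eq_slope_criticalEta hα₀ hβ hr hr₂',
      lt_div_iff₀ hη] at hLχ
    exact ⟨_, hη, (mul_le_mul_of_nonneg_left hle hL).trans_lt hLχ, hLχ⟩

end Eta

theorem stmt0_general (α β r R χ lam : ℝ)
    (hα : 0 ≤ α) (hβ : 0 < β) (hr : 1 < r) (hR : 0 < R)
    (hχ : 0 < χ)
    (hlam : 1 < lam) (hlamχ : ((lam * χ : ℝ) : EReal) < chiStar α β r R) :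
    ∃ M : ℝ, 0 < M ∧
      HasDerivAt (fun τ : ℝ => (1 + τ * M) * (R⁻¹ - lam * χ * τ)) (M / R - lam * χ) 0 ∧
      HasDerivAt (fun τ : ℝ => (1 + τ * M) * ((etaM α β r M)⁻¹ - lam * χ * τ))
        (M / etaM α β r M - lam * χ) 0 ∧
      0 < M / R - lam * χ ∧ 0 < M / etaM α β r M - lam * χ ∧
      ∃ τs : ℝ, 0 < τs ∧ ∀ t ∈ Set.Ioo (0 : ℝ) τs,
        R⁻¹ ≤ (1 + t * M) * (R⁻¹ - lam * χ * t) ∧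
        (etaM α β r M)⁻¹ ≤ (1 + t * M) * ((etaM α β r M)⁻¹ - lam * χ * t) := by
  have hL : 0 < lam * χ := mul_pos (one_pos.trans hlam) hχ
  obtain ⟨η, hη, hR', hη'⟩ := exists_eta_of_lt_chiStar hα hβ hr hR hL.le hlamχ
  set M := mOfEta α β r η
  have hM : 0 < M := (mul_pos hL hη).trans hη'
  refine ⟨M, hM, ?_⟩
  rw [etaM_mOfEta hβ hr hη]
  rw [← lt_div_iff₀ hR, div_eq_mul_inv] at hR'
  rw [← lt_div_iff₀ hη, div_eq_mul_inv] at hη'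
  obtain ⟨τs, hτs, hsub⟩ := mem_nhdsGT_iff_exists_Ioo_subset.mp
    ((eventually_le_theta hR').and (eventually_le_theta hη'))
  simp only [div_eq_mul_inv]
  exact ⟨hasDerivAt_theta M _ _, hasDerivAt_theta M _ _, sub_pos.mpr hR', sub_pos.mpr hη',
    τs, hτs, fun t ht => hsub ht⟩

/-- there is `M > 0` such that `θ₁'(0) = M/R − λχ > 0` and
`θ₂'(0) = M/η_M − λχ > 0`, and consequently `τ* > 0` such that `θᵢ(t) ≥ θᵢ(0)`
for all `t ∈ (0, τ*)`. -/
theorem stmt0 (α β r R χ lam : ℝ)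
    (hα : 0 ≤ α) (hβ : 0 < β) (hr : 1 < r) (hR : 0 < R)
    (hχ : 0 < χ) (hχs : (χ : EReal) < chiStar α β r R)
    (hlam : 1 < lam) (hlamχ : ((lam * χ : ℝ) : EReal) < chiStar α β r R) :
    ∃ M : ℝ, 0 < M ∧
      HasDerivAt (fun τ : ℝ => (1 + τ * M) * (R⁻¹ - lam * χ * τ)) (M / R - lam * χ) 0 ∧
      HasDerivAt (fun τ : ℝ => (1 + τ * M) * ((etaM α β r M)⁻¹ - lam * χ * τ))
        (M / etaM α β r M - lam * χ) 0 ∧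
      0 < M / R - lam * χ ∧ 0 < M / etaM α β r M - lam * χ ∧
      ∃ τs : ℝ, 0 < τs ∧ ∀ t ∈ Set.Ioo (0 : ℝ) τs,
        R⁻¹ ≤ (1 + t * M) * (R⁻¹ - lam * χ * t) ∧
        (etaM α β r M)⁻¹ ≤ (1 + t * M) * ((etaM α β r M)⁻¹ - lam * χ * t) :=
  stmt0_general α β r R χ lam hα hβ hr hR hχ hlam hlamχ
end

section
/- Let α ≥ 0, β > 0, 1 < r < 2 and R > 0 with R^{r−1} > α/(β(2−r)). Set M* = βR^{r−1} − α (which is positive). Then for every M > 0, min( M β^{1/(r−1)} (α+M)^{−1/(r−1)}, M/R ) ≤ M*/R = R^{−1}(βR^{r−1} − α), with equality when M = M*. In particular, sup_{M>0} min( M β^{1/(r−1)} (α+M)^{−1/(r−1)}, M/R ) = R^{−1}(βR^{r−1} − α), attained at M = M*. -/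
open Real Set

/-!
Write `p = r - 1`, `q = 1 / p` and `M* = β R^p - α`. Since `α + M* = β R^p`, one has
`f(M*) = M* β^q (β R^p)^(-q) = M* / R`, so both terms of the minimum agree at `M*`.
Below `M*` the term `M / R` is at most `M* / R`. Above `M*`, writing `α + M = (α + M*) (1 + s)`,
Bernoulli's inequality `(1 + s)^q ≥ 1 + q s` reduces `f(M) ≤ f(M*)` to `α ≤ (q - 1) M*`, which
follows from the hypothesis `R^p > α / (β (2 - r))`.
-/

lemma mul_rpow_le_mul_rpow_of_le {α c M q : ℝ} (hq : 1 ≤ q) (hαc : 0 < α + c)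
    (hα : α ≤ (q - 1) * c) (hcM : c ≤ M) : M * (α + c) ^ q ≤ c * (α + M) ^ q := by
  have hc : 0 ≤ c := by nlinarith
  set s := (M - c) / (α + c) with hs
  have hs0 : 0 ≤ s := div_nonneg (by linarith) hαc.le
  have hsplit : α + M = (α + c) * (1 + s) := by rw [hs]; field_simp; ring
  have hlinear : M ≤ c * (1 + q * s) := by
    have : c * (1 + q * s) - M = ((q - 1) * c - α) * (M - c) / (α + c) := by
      rw [hs]; field_simp; ring
    nlinarith [div_nonneg (mul_nonneg (sub_nonneg.2 hα) (sub_nonneg.2 hcM)) hαc.le]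
  have hbernoulli : 1 + q * s ≤ (1 + s) ^ q :=
    one_add_mul_self_le_rpow_one_add (by linarith) hq
  calc M * (α + c) ^ q ≤ c * (1 + q * s) * (α + c) ^ q := by gcongr
    _ ≤ c * (1 + s) ^ q * (α + c) ^ q := by gcongr
    _ = c * (α + M) ^ q := by
      rw [hsplit, mul_rpow hαc.le (by linarith)]; ring

lemma mul_rpow_neg_le_of_le {α c M q : ℝ} (hq : 1 ≤ q) (hαc : 0 < α + c)
    (hα : α ≤ (q - 1) * c) (hcM : c ≤ M) : M * (α + M) ^ (-q) ≤ c * (α + c) ^ (-q) := by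
  have hαM : 0 < α + M := by linarith
  rw [rpow_neg hαM.le, rpow_neg hαc.le, ← div_eq_mul_inv, ← div_eq_mul_inv,
    div_le_div_iff₀ (rpow_pos_of_pos hαM q) (rpow_pos_of_pos hαc q)]
  exact mul_rpow_le_mul_rpow_of_le hq hαc hα hcM

lemma mul_rpow_mul_rpow_neg_eq_div {M β R p : ℝ} (hβ : 0 < β) (hR : 0 < R) (hp : p ≠ 0) :
    M * β ^ (1 / p) * (β * R ^ p) ^ (-(1 / p)) = M / R := by
  rw [rpow_neg (by positivity), mul_rpow hβ.le (by positivity), one_div,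
    rpow_rpow_inv hR.le hp]
  have : β ^ p⁻¹ ≠ 0 := (rpow_pos_of_pos hβ _).ne'
  field_simp

theorem stmt3_general (α β r R : ℝ) (hβ : 0 < β) (hr1 : 1 < r) (hr2 : r < 2)
    (hR : 0 < R) (hcond : α / (β * (2 - r)) < R ^ (r - 1)) :
    0 < β * R ^ (r - 1) - α ∧
    (∀ M : ℝ, 0 < M →
      min (M * β ^ (1 / (r - 1)) * (α + M) ^ (-(1 / (r - 1)))) (M / R)
        ≤ R⁻¹ * (β * R ^ (r - 1) - α)) ∧
    min ((β * R ^ (r - 1) - α) * β ^ (1 / (r - 1)) *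
          (α + (β * R ^ (r - 1) - α)) ^ (-(1 / (r - 1))))
        ((β * R ^ (r - 1) - α) / R) = R⁻¹ * (β * R ^ (r - 1) - α) ∧
    IsGreatest
      ((fun M : ℝ => min (M * β ^ (1 / (r - 1)) * (α + M) ^ (-(1 / (r - 1)))) (M / R)) ''
        Set.Ioi 0)
      (R⁻¹ * (β * R ^ (r - 1) - α)) := by
  have hp : 0 < r - 1 := by linarith
  have hRp : 0 < R ^ (r - 1) := rpow_pos_of_pos hR _
  have hα : α < β * (2 - r) * R ^ (r - 1) := by
    rw [div_lt_iff₀ (by nlinarith)] at hcond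
    linarith
  set Ms := β * R ^ (r - 1) - α
  have hMs_pos : 0 < Ms := by nlinarith [mul_pos (mul_pos hβ hp) hRp]
  have hαMs : α + Ms = β * R ^ (r - 1) := by ring
  have hα_le : α ≤ (1 / (r - 1) - 1) * Ms := by
    rw [show 1 / (r - 1) - 1 = (2 - r) / (r - 1) by field_simp; ring, div_mul_eq_mul_div,
      le_div_iff₀ hp]
    nlinarith
  have hq : 1 ≤ 1 / (r - 1) := by rw [le_div_iff₀ hp]; linarith
  have hfMs : Ms * β ^ (1 / (r - 1)) * (α + Ms) ^ (-(1 / (r - 1))) = Ms / R := by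
    rw [hαMs, mul_rpow_mul_rpow_neg_eq_div hβ hR hp.ne']
  have hbound : ∀ M : ℝ,
      min (M * β ^ (1 / (r - 1)) * (α + M) ^ (-(1 / (r - 1)))) (M / R) ≤ R⁻¹ * Ms := by
    intro M
    rw [inv_mul_eq_div]
    rcases le_total M Ms with hM | hM
    · exact (min_le_right _ _).trans (by gcongr)
    · refine (min_le_left _ _).trans ?_
      rw [← hfMs, mul_right_comm, mul_right_comm Ms]
      exact mul_le_mul_of_nonneg_right
        (mul_rpow_neg_le_of_le hq (by rw [hαMs]; positivity) hα_le hM) (by positivity)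
  have hattained : min (Ms * β ^ (1 / (r - 1)) * (α + Ms) ^ (-(1 / (r - 1)))) (Ms / R)
      = R⁻¹ * Ms := by
    rw [hfMs, min_self, inv_mul_eq_div]
  refine ⟨hMs_pos, fun M _ => hbound M, hattained, ⟨Ms, hMs_pos, hattained⟩, ?_⟩
  rintro _ ⟨M, -, rfl⟩
  exact hbound M

/-- case `1 < r < 2`, `R^{r−1} > α/(β(2−r))`: with `M* = βR^{r−1} − α > 0`,
`min(f(M), M/R) ≤ M*/R = R⁻¹(βR^{r−1} − α)` for all `M > 0` with equality at `M = M*`;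
in particular the supremum is `R⁻¹(βR^{r−1} − α)`, attained at `M*`. -/
theorem stmt3 (α β r R : ℝ) (hα : 0 ≤ α) (hβ : 0 < β) (hr1 : 1 < r) (hr2 : r < 2)
    (hR : 0 < R) (hcond : α / (β * (2 - r)) < R ^ (r - 1)) :
    0 < β * R ^ (r - 1) - α ∧
    (∀ M : ℝ, 0 < M →
      min (M * β ^ (1 / (r - 1)) * (α + M) ^ (-(1 / (r - 1)))) (M / R)
        ≤ R⁻¹ * (β * R ^ (r - 1) - α)) ∧
    min ((β * R ^ (r - 1) - α) * β ^ (1 / (r - 1)) *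
          (α + (β * R ^ (r - 1) - α)) ^ (-(1 / (r - 1))))
        ((β * R ^ (r - 1) - α) / R) = R⁻¹ * (β * R ^ (r - 1) - α) ∧
    IsGreatest
      ((fun M : ℝ => min (M * β ^ (1 / (r - 1)) * (α + M) ^ (-(1 / (r - 1)))) (M / R)) ''
        Set.Ioi 0)
      (R⁻¹ * (β * R ^ (r - 1) - α)) :=
  stmt3_general α β r R hβ hr1 hr2 hR hcond
end

section
/- Let α > 0, β > 0, 1 < r < 2 and R > 0 with R^{r−1} ≤ α/(β(2−r)). Set M_f = α(r−1)/(2−r). Then for every M > 0, min( M β^{1/(r−1)} (α+M)^{−1/(r−1)}, M/R ) ≤ α^{(2−r)/(1−r)} β^{1/(r−1)} (2−r)^{(2−r)/(r−1)} (r−1), with equality when M = M_f. In particular, sup_{M>0} min( M β^{1/(r−1)} (α+M)^{−1/(r−1)}, M/R ) = α^{(2−r)/(1−r)} β^{1/(r−1)} (2−r)^{(2−r)/(r−1)} (r−1), attained at M = M_f. -/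
open Real Set

/-!
On `M > 0`, `M * β ^ p * (α + M) ^ (-p)` with `p = 1 / (r - 1) > 1` peaks at `M_f = α / (p - 1)`:
cross-multiplied, this is Bernoulli's inequality `u ^ p ≥ 1 + p (u - 1)` for
`u = (α + M) / (α + M_f)`, since `α + M_f = p M_f`. The condition on `R` says exactly that the
peak value lies below `M_f / R`, so the minimum with `M / R` does not lower the maximum.
-/

lemma mul_add_rpow_le_of_sub_one_mul_eq {α m M p : ℝ} (hp : 1 ≤ p) (hm : 0 < m)
    (hαm : (p - 1) * m = α) (hM : 0 ≤ α + M) :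
    M * (α + m) ^ p ≤ m * (α + M) ^ p := by
  have hsum : α + m = p * m := by rw [← hαm]; ring
  have hsum_pos : 0 < α + m := by rw [hsum]; positivity
  set u := (α + M) / (α + m) with hu
  have hMu : α + M = (α + m) * u := by rw [hu]; field_simp
  have hu_nonneg : 0 ≤ u := by positivity
  have hbern : 1 + p * (u - 1) ≤ u ^ p := by
    simpa using one_add_mul_self_le_rpow_one_add (s := u - 1) (by linarith) hp
  have hM_eq : M = m * (1 + p * (u - 1)) := by
    linear_combination hMu + (u - 1) * hsum
  calc M * (α + m) ^ p = m * (1 + p * (u - 1)) * (α + m) ^ p := by rw [← hM_eq]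
    _ ≤ m * u ^ p * (α + m) ^ p := by gcongr
    _ = m * (α + M) ^ p := by
      rw [hMu, mul_rpow hsum_pos.le (by positivity)]; ring

lemma mul_add_rpow_neg_le_of_sub_one_mul_eq {α m M p : ℝ} (hp : 1 ≤ p) (hm : 0 < m)
    (hαm : (p - 1) * m = α) (hM : 0 < α + M) :
    M * (α + M) ^ (-p) ≤ m * (α + m) ^ (-p) := by
  have hsum_pos : 0 < α + m := by nlinarith
  rw [rpow_neg hM.le, rpow_neg hsum_pos.le, ← div_eq_mul_inv, ← div_eq_mul_inv,
    div_le_div_iff₀ (by positivity) (by positivity)]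
  exact mul_add_rpow_le_of_sub_one_mul_eq hp hm hαm hM.le

section Peak

variable {α β r : ℝ}

lemma add_peak_eq (hr2 : r < 2) : α + α * (r - 1) / (2 - r) = α / (2 - r) := by
  have : 2 - r ≠ 0 := by linarith
  field_simp
  ring

lemma sub_one_mul_peak (hr1 : 1 < r) (hr2 : r < 2) :
    (1 / (r - 1) - 1) * (α * (r - 1) / (2 - r)) = α := by
  have : r - 1 ≠ 0 := by linarith
  have : 2 - r ≠ 0 := by linarith
  field_simp
  ring

lemma peak_value (hα : 0 < α) (hr1 : 1 < r) (hr2 : r < 2) :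
    α * (r - 1) / (2 - r) * β ^ (1 / (r - 1)) * (α + α * (r - 1) / (2 - r)) ^ (-(1 / (r - 1)))
      = α ^ ((2 - r) / (1 - r)) * β ^ (1 / (r - 1)) * (2 - r) ^ ((2 - r) / (r - 1)) * (r - 1) := by
  have h2r : 0 < 2 - r := by linarith
  have hr1' : r - 1 ≠ 0 := by linarith
  have hexp1 : (2 - r) / (1 - r) = 1 - 1 / (r - 1) := by
    have : 1 - r ≠ 0 := by linarith
    field_simp
    ring
  have hexp2 : (2 - r) / (r - 1) = 1 / (r - 1) - 1 := by field_simp; ring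
  have := rpow_pos_of_pos hα (1 / (r - 1))
  have := rpow_pos_of_pos h2r (1 / (r - 1))
  rw [hexp1, hexp2, add_peak_eq hr2, rpow_neg (by positivity), div_rpow hα.le h2r.le,
    rpow_sub hα, rpow_sub h2r, rpow_one, rpow_one]
  field_simp

lemma peak_le_div {R : ℝ} (hα : 0 < α) (hβ : 0 < β) (hr1 : 1 < r) (hr2 : r < 2) (hR : 0 < R)
    (hcond : R ^ (r - 1) ≤ α / (β * (2 - r))) :
    α * (r - 1) / (2 - r) * β ^ (1 / (r - 1)) * (α + α * (r - 1) / (2 - r)) ^ (-(1 / (r - 1)))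
      ≤ α * (r - 1) / (2 - r) / R := by
  have hr1' : 0 < r - 1 := by linarith
  have h2r : 0 < 2 - r := by linarith
  have hβR : β * R ^ (r - 1) ≤ α / (2 - r) := by
    rw [le_div_iff₀ (by positivity)] at hcond
    rw [le_div_iff₀ h2r]
    linarith
  have hpow : β ^ (1 / (r - 1)) * R ≤ (α / (2 - r)) ^ (1 / (r - 1)) := by
    calc β ^ (1 / (r - 1)) * R = (β * R ^ (r - 1)) ^ (1 / (r - 1)) := by
          rw [mul_rpow hβ.le (by positivity), ← rpow_mul hR.le, mul_one_div_cancel hr1'.ne',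
            rpow_one]
      _ ≤ (α / (2 - r)) ^ (1 / (r - 1)) := by gcongr
  rw [add_peak_eq hr2, rpow_neg (by positivity), mul_assoc, ← div_eq_mul_inv, ← mul_div_assoc,
    div_le_div_iff₀ (by positivity) hR, mul_assoc]
  gcongr

end Peak

/-- case `1 < r < 2`, `R^{r−1} ≤ α/(β(2−r))`: with `M_f = α(r−1)/(2−r)`,
`min(f(M), M/R) ≤ α^{(2−r)/(1−r)} β^{1/(r−1)} (2−r)^{(2−r)/(r−1)} (r−1)` for all `M > 0`,
with equality at `M = M_f`; in particular the supremum equals that value, attained at `M_f`. -/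
theorem stmt4 (α β r R : ℝ) (hα : 0 < α) (hβ : 0 < β) (hr1 : 1 < r) (hr2 : r < 2)
    (hR : 0 < R) (hcond : R ^ (r - 1) ≤ α / (β * (2 - r))) :
    (∀ M : ℝ, 0 < M →
      min (M * β ^ (1 / (r - 1)) * (α + M) ^ (-(1 / (r - 1)))) (M / R)
        ≤ α ^ ((2 - r) / (1 - r)) * β ^ (1 / (r - 1)) * (2 - r) ^ ((2 - r) / (r - 1)) * (r - 1)) ∧
    min ((α * (r - 1) / (2 - r)) * β ^ (1 / (r - 1)) *
          (α + α * (r - 1) / (2 - r)) ^ (-(1 / (r - 1))))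
        ((α * (r - 1) / (2 - r)) / R)
      = α ^ ((2 - r) / (1 - r)) * β ^ (1 / (r - 1)) * (2 - r) ^ ((2 - r) / (r - 1)) * (r - 1) ∧
    IsGreatest
      ((fun M : ℝ => min (M * β ^ (1 / (r - 1)) * (α + M) ^ (-(1 / (r - 1)))) (M / R)) ''
        Set.Ioi 0)
      (α ^ ((2 - r) / (1 - r)) * β ^ (1 / (r - 1)) * (2 - r) ^ ((2 - r) / (r - 1)) * (r - 1)) := by
  have hp : 1 ≤ 1 / (r - 1) := by rw [le_div_iff₀ (by linarith)]; linarith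
  have hMf : 0 < α * (r - 1) / (2 - r) := by
    have : 0 < r - 1 := by linarith
    have : 0 < 2 - r := by linarith
    positivity
  have hle : ∀ M : ℝ, 0 < M →
      min (M * β ^ (1 / (r - 1)) * (α + M) ^ (-(1 / (r - 1)))) (M / R)
        ≤ α ^ ((2 - r) / (1 - r)) * β ^ (1 / (r - 1)) * (2 - r) ^ ((2 - r) / (r - 1)) * (r - 1) := by
    intro M hM
    rw [← peak_value hα hr1 hr2, mul_right_comm M, mul_right_comm (α * _ / _)]
    refine (min_le_left _ _).trans (mul_le_mul_of_nonneg_right ?_ (by positivity))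
    exact mul_add_rpow_neg_le_of_sub_one_mul_eq hp hMf (sub_one_mul_peak hr1 hr2) (by positivity)
  have heq := (min_eq_left (peak_le_div hα hβ hr1 hr2 hR hcond)).trans (peak_value hα hr1 hr2)
  refine ⟨hle, heq, ⟨α * (r - 1) / (2 - r), hMf, heq⟩, ?_⟩
  rintro v ⟨M, hM, rfl⟩
  exact hle M hM
end

section
/- Let (Ω, μ) be a finite measure space, let u, w : Ω → [0,∞) be integrable, and let ψ : Ω → ℝ be bounded and measurable. Then the function ε ↦ ∫_Ω ( e^{εψ/2} √u − √w )² dμ is differentiable at ε = 0 with derivative ∫_Ω √u (√u − √w) ψ dμ. -/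
/-!
Differentiate under the integral sign. With `a = √u` and `b = √w`, both in `L²(μ)`, the
`t`-derivative of `(e^{tψ/2} a - b)²` is `(e^{tψ/2} a - b) e^{tψ/2} a ψ`; for `|t - t₀| < 1` and
`|ψ| ≤ B` it is dominated by `B K (K |a| + |b|) |a|` with `K = e^{(|t₀|+1)B/2}`, which is
integrable by Hölder's inequality.
-/

open Real MeasureTheory

section

variable {X : Type*} [MeasurableSpace X] {μ : Measure X}

lemma memLp_two_sqrt {u : X → ℝ} (hu0 : 0 ≤ᵐ[μ] u) (hu : Integrable u μ) :
    MemLp (fun x => √(u x)) 2 μ := by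
  refine (memLp_two_iff_integrable_sq (continuous_sqrt.comp_aestronglyMeasurable hu.1)).2 ?_
  refine hu.congr ?_
  filter_upwards [hu0] with x hx
  rw [sq_sqrt hx]

lemma exp_mul_div_two_le_of_mem_ball {t₀ t s B : ℝ} (ht : t ∈ Metric.ball t₀ 1) (hs : |s| ≤ B) :
    exp (t * s / 2) ≤ exp ((|t₀| + 1) * B / 2) := by
  rw [Metric.mem_ball, Real.dist_eq] at ht
  have ht' : |t| ≤ |t₀| + 1 := by
    linarith [abs_sub_abs_le_abs_sub t t₀]
  have : t * s ≤ (|t₀| + 1) * B :=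
    calc t * s ≤ |t * s| := le_abs_self _
      _ = |t| * |s| := abs_mul t s
      _ ≤ (|t₀| + 1) * B := mul_le_mul ht' hs (abs_nonneg s) (by positivity)
  gcongr

theorem hasDerivAt_integral_sq_exp_mul_sub {a b ψ : X → ℝ} (ha : MemLp a 2 μ) (hb : MemLp b 2 μ)
    (hψ : AEStronglyMeasurable ψ μ) {B : ℝ} (hψB : ∀ᵐ x ∂μ, |ψ x| ≤ B) (t₀ : ℝ) :
    HasDerivAt (fun t => ∫ x, (exp (t * ψ x / 2) * a x - b x) ^ 2 ∂μ)
      (∫ x, exp (t₀ * ψ x / 2) * a x * (exp (t₀ * ψ x / 2) * a x - b x) * ψ x ∂μ) t₀ := by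
  set K := exp ((|t₀| + 1) * B / 2)
  have hexp_meas (t : ℝ) : AEStronglyMeasurable (fun x => exp (t * ψ x / 2)) μ := by
    fun_prop
  have hexp_le : ∀ᵐ x ∂μ, ∀ t ∈ Metric.ball t₀ 1, exp (t * ψ x / 2) ≤ K := by
    filter_upwards [hψB] with x hx t ht
    exact exp_mul_div_two_le_of_mem_ball ht hx
  have hmemLp : MemLp (fun x => exp (t₀ * ψ x / 2) * a x - b x) 2 μ := by
    refine (ha.of_le_mul (c := K) ((hexp_meas t₀).mul ha.1) ?_).sub hb
    filter_upwards [hexp_le] with x hx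
    rw [Pi.mul_apply, norm_mul, Real.norm_of_nonneg (exp_pos _).le]
    gcongr
    exact hx t₀ (Metric.mem_ball_self one_pos)
  have hbound : Integrable (fun x => B * K * ((K * |a x| + |b x|) * |a x|)) μ :=
    (((ha.norm.const_mul K).add hb.norm).integrable_mul ha.norm).const_mul (B * K)
  refine (hasDerivAt_integral_of_dominated_loc_of_deriv_le
    (F := fun t x => (exp (t * ψ x / 2) * a x - b x) ^ 2)
    (F' := fun t x => exp (t * ψ x / 2) * a x * (exp (t * ψ x / 2) * a x - b x) * ψ x)
    (Metric.ball_mem_nhds t₀ one_pos)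
    (.of_forall fun t => (((hexp_meas t).mul ha.1).sub hb.1).pow 2) hmemLp.integrable_sq
    ((((hexp_meas t₀).mul ha.1).mul (((hexp_meas t₀).mul ha.1).sub hb.1)).mul hψ)
    ?_ hbound ?_).2
  · filter_upwards [hexp_le, hψB] with x hxK hx t ht
    have he := hxK t ht
    have hea : |exp (t * ψ x / 2) * a x| ≤ K * |a x| := by
      rw [abs_mul, abs_of_pos (exp_pos _)]
      gcongr
    have heab : |exp (t * ψ x / 2) * a x - b x| ≤ K * |a x| + |b x| :=
      (abs_sub _ _).trans (by gcongr)
    rw [Real.norm_eq_abs, abs_mul, abs_mul]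
    calc |exp (t * ψ x / 2) * a x| * |exp (t * ψ x / 2) * a x - b x| * |ψ x|
        ≤ K * |a x| * (K * |a x| + |b x|) * B := by gcongr
      _ = B * K * ((K * |a x| + |b x|) * |a x|) := by ring
  · filter_upwards with x t _
    have hd : HasDerivAt (fun s => exp (s * ψ x / 2)) (exp (t * ψ x / 2) * (ψ x / 2)) t := by
      simpa [mul_div_assoc] using ((hasDerivAt_id t).mul_const (ψ x / 2)).exp
    refine (((hd.mul_const (a x)).sub_const (b x)).fun_pow 2).congr_deriv ?_
    ring

end

theorem stmt7_general {X : Type*} [MeasurableSpace X] (μ : Measure X)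
    (u w ψ : X → ℝ) (hu0 : ∀ x, 0 ≤ u x) (hw0 : ∀ x, 0 ≤ w x)
    (huI : Integrable u μ) (hwI : Integrable w μ)
    (hψm : Measurable ψ) (hψb : ∃ B : ℝ, ∀ x, |ψ x| ≤ B) :
    HasDerivAt
      (fun ε : ℝ =>
        ∫ x, (Real.exp (ε * ψ x / 2) * Real.sqrt (u x) - Real.sqrt (w x)) ^ 2 ∂μ)
      (∫ x, Real.sqrt (u x) * (Real.sqrt (u x) - Real.sqrt (w x)) * ψ x ∂μ) 0 := by
  obtain ⟨B, hB⟩ := hψb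
  simpa using hasDerivAt_integral_sq_exp_mul_sub
    (memLp_two_sqrt (.of_forall hu0) huI) (memLp_two_sqrt (.of_forall hw0) hwI)
    hψm.aestronglyMeasurable (.of_forall hB) 0

/-- differentiability at `ε = 0` of
`ε ↦ ∫ (e^{εψ/2}√u − √w)² dμ`, with derivative `∫ √u(√u − √w)ψ dμ`. -/
theorem stmt7 {X : Type*} [MeasurableSpace X] (μ : Measure X) [IsFiniteMeasure μ]
    (u w ψ : X → ℝ) (hu0 : ∀ x, 0 ≤ u x) (hw0 : ∀ x, 0 ≤ w x)
    (huI : Integrable u μ) (hwI : Integrable w μ)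
    (hψm : Measurable ψ) (hψb : ∃ B : ℝ, ∀ x, |ψ x| ≤ B) :
    HasDerivAt
      (fun ε : ℝ =>
        ∫ x, (Real.exp (ε * ψ x / 2) * Real.sqrt (u x) - Real.sqrt (w x)) ^ 2 ∂μ)
      (∫ x, Real.sqrt (u x) * (Real.sqrt (u x) - Real.sqrt (w x)) * ψ x ∂μ) 0 :=
  stmt7_general μ u w ψ hu0 hw0 huI hwI hψm hψb
end

section
/- Let Ω ⊂ ℝ^d be a bounded domain with Lebesgue measure, let F satisfy (A1)–(A2), let M > 0, and let τ > 0 with ατ < 1. Set η_M = ((α+M)/β)^{1/(r−1)}. Let u ∈ L^∞(Ω) be nonnegative and let v : Ω → [0,∞) be measurable and satisfy the Euler–Lagrange identity √v(x) − √u(x) = −(τ/2) √v(x) F'(v(x)) for a.e. x ∈ Ω with v(x) > 0. Then u ≥ (1−ατ) v ≥ 0 a.e., v is essentially bounded, and: if essSup v > η_M then essSup v ≤ (essSup u)/(1+τM); in any case essSup v ≤ max( η_M, (essSup u)/(1+τM) ). -/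
open Real Set MeasureTheory

private lemma essSup_zero_real {X : Type*} [MeasurableSpace X] (f : X → ℝ) :
    essSup f (0 : Measure X) = 0 := by
  rw [essSup_eq_sInf]
  have : { a : ℝ | (0 : Measure X) { x | a < f x } = 0 } = Set.univ := by
    ext a; simp
  rw [this]
  exact Real.sInf_of_not_bddBelow not_bddBelow_univ

/-- Key pointwise estimate coming from the squared EL identity. -/
private lemma key_pt (τ u v D c : ℝ) (hu : 0 ≤ u) (hv : 0 ≤ v)
    (heq : Real.sqrt u = Real.sqrt v * (1 + τ / 2 * D))
    (hτ : 0 < τ) (hcD : c ≤ D) (hc : 0 ≤ 1 + τ / 2 * c) :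
    v * (1 + τ * c) ≤ u := by
  have hsv : 0 ≤ Real.sqrt v := Real.sqrt_nonneg v
  have h1 : Real.sqrt v * (1 + τ / 2 * c) ≤ Real.sqrt u := by
    rw [heq]
    exact mul_le_mul_of_nonneg_left (by nlinarith) hsv
  have h2 : (Real.sqrt v * (1 + τ / 2 * c)) ^ 2 ≤ (Real.sqrt u) ^ 2 := by
    apply pow_le_pow_left₀ (by positivity) h1
  rw [mul_pow, Real.sq_sqrt hv, Real.sq_sqrt hu] at h2
  nlinarith [sq_nonneg (τ / 2 * c)]

/-- the Fisher–Rao step contracts the `L^∞` norm: from the pointwise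
Euler–Lagrange identity one gets `u ≥ (1−ατ)v ≥ 0` a.e., `v ∈ L^∞`, and
`essSup v ≤ (essSup u)/(1+τM)` whenever `essSup v > η_M`; in any case
`essSup v ≤ max(η_M, (essSup u)/(1+τM))`. -/
theorem stmt9 (d : ℕ) (Ω : Set (Fin d → ℝ)) (hΩo : IsOpen Ω) (hΩb : Bornology.IsBounded Ω)
    (F : ℝ → ℝ) (α β r : ℝ) (hα : 0 ≤ α) (hβ : 0 < β) (hr : 1 < r)
    (hF1 : ContDiffOn ℝ 1 F (Set.Ici 0)) (hF2 : ContDiffOn ℝ 2 F (Set.Ioi 0))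
    (hF'' : ∀ s : ℝ, 0 < s → 0 < deriv (deriv F) s)
    (hFlow : ∀ s : ℝ, 0 < s → β * s ^ (r - 1) - α ≤ deriv F s)
    (M τ : ℝ) (hM : 0 < M) (hτ : 0 < τ) (hατ : α * τ < 1)
    (u v : (Fin d → ℝ) → ℝ) (hu0 : ∀ x, 0 ≤ u x) (hv0 : ∀ x, 0 ≤ v x)
    (hum : Measurable u) (hvm : Measurable v)
    (huL : MemLp u ⊤ (volume.restrict Ω))
    (hEL : ∀ᵐ x ∂(volume.restrict Ω), 0 < v x →
      Real.sqrt (v x) - Real.sqrt (u x) = -(τ / 2) * (Real.sqrt (v x) * deriv F (v x))) :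
    (∀ᵐ x ∂(volume.restrict Ω), (1 - α * τ) * v x ≤ u x ∧ 0 ≤ (1 - α * τ) * v x) ∧
    MemLp v ⊤ (volume.restrict Ω) ∧
    (etaM α β r M < essSup v (volume.restrict Ω) →
      essSup v (volume.restrict Ω) ≤ essSup u (volume.restrict Ω) / (1 + τ * M)) ∧
    essSup v (volume.restrict Ω)
      ≤ max (etaM α β r M) (essSup u (volume.restrict Ω) / (1 + τ * M)) := by
  set μ := volume.restrict Ω with hμdef
  set η := etaM α β r M with hηdef
  have hατ' : 0 < 1 - α * τ := by linarith
  have hτM : (0:ℝ) < 1 + τ * M := by nlinarith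
  have hη : 0 < η := by
    rw [hηdef, etaM]
    exact Real.rpow_pos_of_pos (div_pos (by linarith) hβ) _
  have hηpow : η ^ (r - 1) = (α + M) / β := by
    rw [hηdef, etaM, ← Real.rpow_mul (le_of_lt (div_pos (by linarith) hβ)), one_div,
      inv_mul_cancel₀ (by linarith : r - 1 ≠ 0), Real.rpow_one]
  -- EL identity in product form
  have hEL' : ∀ᵐ x ∂μ, 0 < v x →
      Real.sqrt (u x) = Real.sqrt (v x) * (1 + τ / 2 * deriv F (v x)) := by
    filter_upwards [hEL] with x hx h0
    have e := hx h0
    linear_combination -e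
  -- first a.e. bound
  have hae1 : ∀ᵐ x ∂μ, (1 - α * τ) * v x ≤ u x := by
    filter_upwards [hEL'] with x hx
    rcases eq_or_lt_of_le (hv0 x) with h0 | h0
    · rw [← h0]; simpa using hu0 x
    · have hD : -α ≤ deriv F (v x) := by
        have h1 := hFlow (v x) h0
        have h2 : 0 ≤ β * (v x) ^ (r - 1) :=
          mul_nonneg hβ.le (Real.rpow_nonneg (hv0 x) _)
        linarith
      have h := key_pt τ (u x) (v x) (deriv F (v x)) (-α) (hu0 x) (hv0 x)
        (hx h0) hτ hD (by nlinarith)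
      nlinarith [h]
  -- second a.e. bound
  have hae2 : ∀ᵐ x ∂μ, v x ≤ max η (u x / (1 + τ * M)) := by
    filter_upwards [hEL'] with x hx
    rcases le_or_gt (v x) η with h0 | h0
    · exact le_trans h0 (le_max_left _ _)
    · have hvx : 0 < v x := lt_trans hη h0
      have hD : M ≤ deriv F (v x) := by
        have h1 := hFlow (v x) hvx
        have h2 : η ^ (r - 1) ≤ (v x) ^ (r - 1) :=
          Real.rpow_le_rpow hη.le h0.le (by linarith)
        rw [hηpow] at h2
        have h3 : β * ((α + M) / β) ≤ β * (v x) ^ (r - 1) := by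
          exact mul_le_mul_of_nonneg_left h2 hβ.le
        rw [mul_div_cancel₀ _ hβ.ne'] at h3
        linarith
      have h := key_pt τ (u x) (v x) (deriv F (v x)) M (hu0 x) (hv0 x)
        (hx hvx) hτ hD (by nlinarith)
      refine le_trans ?_ (le_max_right _ _)
      rw [le_div_iff₀ hτM]
      linarith
  -- boundedness of u
  have hufin : eLpNormEssSup u μ ≠ ⊤ := by
    have := huL.2
    rwa [eLpNorm_exponent_top, lt_top_iff_ne_top] at this
  have hC : ∀ᵐ x ∂μ, u x ≤ (eLpNormEssSup u μ).toReal := by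
    filter_upwards [ae_le_eLpNormEssSup (f := u) (μ := μ)] with x hx
    have h1 : ((‖u x‖₊ : ENNReal)).toReal ≤ (eLpNormEssSup u μ).toReal :=
      ENNReal.toReal_mono hufin hx
    rw [ENNReal.coe_toReal, coe_nnnorm, Real.norm_eq_abs] at h1
    exact le_trans (le_abs_self _) h1
  -- Memℒp of v
  have hmem : MemLp v ⊤ μ := by
    apply memLp_top_of_bound hvm.aestronglyMeasurable
      ((eLpNormEssSup u μ).toReal / (1 - α * τ))
    filter_upwards [hae1, hC] with x h1 h2
    rw [Real.norm_of_nonneg (hv0 x), le_div_iff₀ hατ']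
    nlinarith
  refine ⟨?_, hmem, ?_⟩
  · filter_upwards [hae1] with x h1
    exact ⟨h1, mul_nonneg hατ'.le (hv0 x)⟩
  rcases eq_or_ne μ 0 with hz | hz
  · have hA : essSup v μ = 0 := by rw [hz]; exact essSup_zero_real v
    constructor
    · intro h; rw [hA] at h; linarith
    · rw [hA]
      exact le_trans hη.le (le_max_left _ _)
  · haveI : (ae μ).NeBot := ae_neBot.2 hz
    have hubdd : Filter.IsBoundedUnder (· ≤ ·) (ae μ) u :=
      ⟨(eLpNormEssSup u μ).toReal, Filter.eventually_map.2 hC⟩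
    have hleB : ∀ᵐ x ∂μ, u x ≤ essSup u μ := ae_le_essSup hubdd
    have hae3 : ∀ᵐ x ∂μ, v x ≤ max η (essSup u μ / (1 + τ * M)) := by
      filter_upwards [hae2, hleB] with x h1 h2
      refine le_trans h1 (max_le_max le_rfl ?_)
      gcongr
    have hcb : Filter.IsCoboundedUnder (· ≤ ·) (ae μ) v :=
      Filter.isCoboundedUnder_le_of_le (ae μ) (fun x => hv0 x)
    have hmax : essSup v μ ≤ max η (essSup u μ / (1 + τ * M)) :=
      Filter.limsup_le_of_le hcb hae3
    refine ⟨?_, hmax⟩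
    intro h
    rcases le_total (essSup u μ / (1 + τ * M)) η with hle | hle
    · rw [max_eq_left hle] at hmax; linarith
    · rwa [max_eq_right hle] at hmax
end

section
/- Let F satisfy (A1)–(A2) and let τ > 0 with ατ < 1/2. Define J_τ(s) = s + τ s F'(s) + (τ²/4) s (F'(s))² for s ≥ 0. Then J_τ'(s) ≥ 1 − ατ + τ s F''(s)(1 − ατ/2) ≥ 1/2 for all s > 0; in particular J_τ is strictly increasing on [0,∞). -/
open Real Set

/-!
Writing `J_τ(s) = s (1 + (τ/2) F'(s))²`, the product rule gives
`J_τ' = 1 + τ F' + (τ²/4) F'² + τ s F'' (1 + (τ/2) F')`. By (A2) we have `F' > -α`, so the first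
three terms are at least `1 - ατ` and the last one at least `τ s F'' (1 - ατ/2) ≥ 0`; with
`ατ < 1/2` this is `≥ 1/2`. Strict monotonicity on `(0,∞)` follows, and it extends to `[0,∞)`
because `J_τ(0) = 0 < J_τ(s)` for `s > 0`, the factor `1 + (τ/2) F'(s)` being at least `3/4`.
-/

/-- `J_τ` built from a function `g` standing for `F'`. -/
noncomputable def fisherRaoJ (τ : ℝ) (g : ℝ → ℝ) (t : ℝ) : ℝ :=
  t + τ * t * g t + τ ^ 2 / 4 * t * g t ^ 2

lemma fisherRaoJ_eq_mul_sq (τ : ℝ) (g : ℝ → ℝ) (t : ℝ) :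
    fisherRaoJ τ g t = t * (1 + τ / 2 * g t) ^ 2 := by
  unfold fisherRaoJ; ring

lemma fisherRaoJ_zero (τ : ℝ) (g : ℝ → ℝ) : fisherRaoJ τ g 0 = 0 := by
  simp [fisherRaoJ]

lemma hasDerivAt_fisherRaoJ (τ : ℝ) {g : ℝ → ℝ} {g' s : ℝ} (hg : HasDerivAt g g' s) :
    HasDerivAt (fisherRaoJ τ g)
      (1 + τ * g s + τ ^ 2 / 4 * g s ^ 2 + τ * s * g' * (1 + τ / 2 * g s)) s := by
  have hid := hasDerivAt_id s
  have h := (hid.add ((hid.const_mul τ).mul hg)).add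
    (((hid.const_mul (τ ^ 2 / 4)).mul (hg.pow 2)))
  refine h.congr_deriv ?_
  simp only [mul_one, id_eq, Pi.pow_apply, Nat.cast_ofNat, Nat.add_one_sub_one, pow_one]
  ring

lemma fisherRaoJ_deriv_lower_bound {τ α a s g' : ℝ} (hτ : 0 ≤ τ) (ha : -α ≤ a) (hs : 0 ≤ s)
    (hg' : 0 ≤ g') :
    1 - α * τ + τ * s * g' * (1 - α * τ / 2)
      ≤ 1 + τ * a + τ ^ 2 / 4 * a ^ 2 + τ * s * g' * (1 + τ / 2 * a) := by
  have hτsg' : 0 ≤ τ * s * g' := by positivity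
  have hτa : -(α * τ) ≤ τ * a := by nlinarith
  nlinarith [sq_nonneg (τ * a), mul_le_mul_of_nonneg_left hτa hτsg']

lemma half_le_fisherRaoJ_deriv_lower_bound {τ α s g' : ℝ} (hτ : 0 ≤ τ) (hατ : α * τ < 1 / 2)
    (hs : 0 ≤ s) (hg' : 0 ≤ g') :
    (1 : ℝ) / 2 ≤ 1 - α * τ + τ * s * g' * (1 - α * τ / 2) := by
  have : 0 ≤ τ * s * g' * (1 - α * τ / 2) := mul_nonneg (by positivity) (by linarith)
  linarith

lemma fisherRaoJ_pos {τ α : ℝ} {g : ℝ → ℝ} {t : ℝ} (ht : 0 < t) (hτ : 0 ≤ τ)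
    (hατ : α * τ < 1 / 2) (hg : -α ≤ g t) : 0 < fisherRaoJ τ g t := by
  rw [fisherRaoJ_eq_mul_sq]
  have : -(α * τ) ≤ τ * g t := by nlinarith
  have : 0 < 1 + τ / 2 * g t := by linarith
  positivity

lemma strictMonoOn_Ici_of_deriv_pos {f : ℝ → ℝ} {a : ℝ} (hf' : ∀ x, a < x → 0 < deriv f x)
    (hfa : ∀ x, a < x → f a < f x) : StrictMonoOn f (Ici a) := by
  rw [← Ioi_insert, strictMonoOn_insert_iff_of_forall_ge fun _ hx => le_of_lt (mem_Ioi.mp hx)]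
  refine ⟨fun x _ hx => hfa x hx, strictMonoOn_of_deriv_pos (convex_Ioi a) (fun x hx => ?_) ?_⟩
  · exact (differentiableAt_of_deriv_ne_zero (hf' x hx).ne').continuousAt.continuousWithinAt
  · simpa only [interior_Ioi, mem_Ioi] using hf'

theorem stmt11_general (F : ℝ → ℝ) (α β r : ℝ) (hβ : 0 < β)
    (hF'' : ∀ s : ℝ, 0 < s → 0 < deriv (deriv F) s)
    (hFlow : ∀ s : ℝ, 0 < s → β * s ^ (r - 1) - α ≤ deriv F s)
    (τ : ℝ) (hτ : 0 < τ) (hατ : α * τ < 1 / 2) :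
    (∀ s : ℝ, 0 < s →
      (1 : ℝ) / 2 ≤ 1 - α * τ + τ * s * deriv (deriv F) s * (1 - α * τ / 2) ∧
      1 - α * τ + τ * s * deriv (deriv F) s * (1 - α * τ / 2)
        ≤ deriv (fun t : ℝ => t + τ * t * deriv F t + τ ^ 2 / 4 * t * (deriv F t) ^ 2) s) ∧
    StrictMonoOn (fun t : ℝ => t + τ * t * deriv F t + τ ^ 2 / 4 * t * (deriv F t) ^ 2)
      (Set.Ici 0) := by
  change (∀ s : ℝ, 0 < s → _ ∧ _ ≤ deriv (fisherRaoJ τ (deriv F)) s) ∧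
    StrictMonoOn (fisherRaoJ τ (deriv F)) (Ici 0)
  have hF'_lower (s : ℝ) (hs : 0 < s) : -α ≤ deriv F s := by
    have := mul_pos hβ (rpow_pos_of_pos hs (r - 1))
    linarith [hFlow s hs]
  have hbounds (s : ℝ) (hs : 0 < s) :
      (1 : ℝ) / 2 ≤ 1 - α * τ + τ * s * deriv (deriv F) s * (1 - α * τ / 2) ∧
      1 - α * τ + τ * s * deriv (deriv F) s * (1 - α * τ / 2)
        ≤ deriv (fisherRaoJ τ (deriv F)) s := by
    -- `deriv (deriv F) s ≠ 0` already forces `F'` to be differentiable at `s`.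
    have hF' := (differentiableAt_of_deriv_ne_zero (hF'' s hs).ne').hasDerivAt
    rw [(hasDerivAt_fisherRaoJ τ hF').deriv]
    exact ⟨half_le_fisherRaoJ_deriv_lower_bound hτ.le hατ hs.le (hF'' s hs).le,
      fisherRaoJ_deriv_lower_bound hτ.le (hF'_lower s hs) hs.le (hF'' s hs).le⟩
  refine ⟨hbounds, strictMonoOn_Ici_of_deriv_pos (fun s hs => ?_) (fun s hs => ?_)⟩
  · linarith [hbounds s hs]
  · rw [fisherRaoJ_zero]
    exact fisherRaoJ_pos hs hτ.le hατ (hF'_lower s hs)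

/-- for `J_τ(s) = s + τ s F'(s) + (τ²/4) s F'(s)²` and `ατ < 1/2`,
`J_τ'(s) ≥ 1 − ατ + τ s F''(s)(1 − ατ/2) ≥ 1/2` for all `s > 0`, and `J_τ` is strictly
increasing on `[0,∞)`. -/
theorem stmt11 (F : ℝ → ℝ) (α β r : ℝ) (hα : 0 ≤ α) (hβ : 0 < β) (hr : 1 < r)
    (hF1 : ContDiffOn ℝ 1 F (Set.Ici 0)) (hF2 : ContDiffOn ℝ 2 F (Set.Ioi 0))
    (hF'' : ∀ s : ℝ, 0 < s → 0 < deriv (deriv F) s)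
    (hFlow : ∀ s : ℝ, 0 < s → β * s ^ (r - 1) - α ≤ deriv F s)
    (τ : ℝ) (hτ : 0 < τ) (hατ : α * τ < 1 / 2) :
    (∀ s : ℝ, 0 < s →
      (1 : ℝ) / 2 ≤ 1 - α * τ + τ * s * deriv (deriv F) s * (1 - α * τ / 2) ∧
      1 - α * τ + τ * s * deriv (deriv F) s * (1 - α * τ / 2)
        ≤ deriv (fun t : ℝ => t + τ * t * deriv F t + τ ^ 2 / 4 * t * (deriv F t) ^ 2) s) ∧
    StrictMonoOn (fun t : ℝ => t + τ * t * deriv F t + τ ^ 2 / 4 * t * (deriv F t) ^ 2)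
      (Set.Ici 0) :=
  stmt11_general F α β r hβ hF'' hFlow τ hτ hατ
end

section
/- Let Ω ⊂ ℝ^d be a bounded domain with finite positive Lebesgue measure |Ω|, let α ≥ 0, β > 0, r > 1, and let r' = r/(r−1) be the Hölder conjugate of r. Set k₀ = |Ω|^{1/r'}, and for ε > 0 set C_ε = (rε)^{−1/(r−1)}/r', A_ε = β k₀^{−r} ε^{−1} − α, B_ε = β k₀^{−r} ε^{−1} C_ε. Let τ > 0 and let u₀ ∈ L¹(Ω), u₁ ∈ L^r(Ω) be nonnegative with ∫_Ω u₀ ≥ ∫_Ω u₁ + τ( β ∫_Ω u₁^r − α ∫_Ω u₁ ). Then for every ε > 0, ‖u₀‖_{L¹(Ω)} ≥ (1 + τ A_ε) ‖u₁‖_{L¹(Ω)} − τ B_ε; equivalently, if 1 + τA_ε > 0 then ‖u₁‖_{L¹(Ω)} ≤ ( ‖u₀‖_{L¹(Ω)} + τ B_ε )/( 1 + τ A_ε ). -/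
open Real Set MeasureTheory

/-- `k₀ = |Ω|^{1/r'}` with `r' = r/(r−1)`. -/
noncomputable def kzero (vol r : ℝ) : ℝ := vol ^ (1 / (r / (r - 1)))

/-- `C_ε = (rε)^{−1/(r−1)}/r'`. -/
noncomputable def Ceps (r ε : ℝ) : ℝ := (r * ε) ^ (-(1 / (r - 1))) / (r / (r - 1))

/-- `A_ε = β k₀^{−r} ε⁻¹ − α`. -/
noncomputable def Aeps (α β r vol ε : ℝ) : ℝ := β * kzero vol r ^ (-r) * ε⁻¹ - α

/-- `B_ε = β k₀^{−r} ε⁻¹ C_ε`. -/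
noncomputable def Beps (α β r vol ε : ℝ) : ℝ := β * kzero vol r ^ (-r) * ε⁻¹ * Ceps r ε

/-- Young: `t ≤ ε t^r + C_ε`. -/
lemma young_aux {r ε t : ℝ} (hr : 1 < r) (hε : 0 < ε) (ht : 0 ≤ t) :
    t ≤ ε * t ^ r + Ceps r ε := by
  have hr0 : (0:ℝ) < r := by linarith
  have hpq : r.HolderConjugate (r / (r - 1)) := Real.HolderConjugate.conjExponent hr
  set c : ℝ := (r * ε) ^ (1 / r) with hc
  have hrε : 0 < r * ε := mul_pos hr0 hε
  have hcpos : 0 < c := Real.rpow_pos_of_pos hrε _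
  have key := Real.young_inequality_of_nonneg (a := c * t) (b := c⁻¹)
    (mul_nonneg hcpos.le ht) (inv_nonneg.2 hcpos.le) hpq
  have h1 : c * t * c⁻¹ = t := by field_simp
  have h2 : (c * t) ^ r = (r * ε) * t ^ r := by
    rw [Real.mul_rpow hcpos.le ht, hc, ← Real.rpow_mul hrε.le,
      one_div_mul_cancel hr0.ne', Real.rpow_one]
  have h3 : (c⁻¹) ^ (r / (r - 1)) = (r * ε) ^ (-(1 / (r - 1))) := by
    rw [hc, ← Real.rpow_neg_one, ← Real.rpow_mul hrε.le, ← Real.rpow_mul hrε.le]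
    congr 1
    field_simp
  rw [h1, h2, h3] at key
  have : (r * ε) * t ^ r / r = ε * t ^ r := by field_simp
  rw [this] at key
  simpa [Ceps] using key


/-- one-step `L¹` estimate for the Fisher–Rao JKO scheme. -/
theorem stmt12 (d : ℕ) (Ω : Set (Fin d → ℝ)) (hΩm : MeasurableSet Ω)
    (hΩfin : volume Ω < ⊤) (hΩpos : 0 < volume Ω)
    (α β r τ : ℝ) (hα : 0 ≤ α) (hβ : 0 < β) (hr : 1 < r) (hτ : 0 < τ)
    (u₀ u₁ : (Fin d → ℝ) → ℝ) (h00 : ∀ x, 0 ≤ u₀ x) (h10 : ∀ x, 0 ≤ u₁ x)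
    (h0I : IntegrableOn u₀ Ω)
    (h1r : MemLp u₁ (ENNReal.ofReal r) (volume.restrict Ω))
    (hineq : (∫ x in Ω, u₁ x) + τ * (β * (∫ x in Ω, u₁ x ^ r) - α * ∫ x in Ω, u₁ x)
      ≤ ∫ x in Ω, u₀ x) :
    ∀ ε : ℝ, 0 < ε →
      ((1 + τ * Aeps α β r (volume Ω).toReal ε) * (∫ x in Ω, u₁ x)
          - τ * Beps α β r (volume Ω).toReal ε ≤ ∫ x in Ω, u₀ x) ∧
      (0 < 1 + τ * Aeps α β r (volume Ω).toReal ε →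
        (∫ x in Ω, u₁ x)
          ≤ ((∫ x in Ω, u₀ x) + τ * Beps α β r (volume Ω).toReal ε)
              / (1 + τ * Aeps α β r (volume Ω).toReal ε)) := by
  intro ε hε
  have hr0 : (0:ℝ) < r := by linarith
  have hpq : r.HolderConjugate (r / (r - 1)) := Real.HolderConjugate.conjExponent hr
  set vol : ℝ := (volume Ω).toReal with hvol
  have hvolpos : 0 < vol := ENNReal.toReal_pos hΩpos.ne' hΩfin.ne
  have hk : 0 < kzero vol r := Real.rpow_pos_of_pos hvolpos _
  set I1 : ℝ := ∫ x in Ω, u₁ x with hI1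
  set Ir : ℝ := ∫ x in Ω, u₁ x ^ r with hIr
  have hI1nn : 0 ≤ I1 := integral_nonneg fun x => h10 x
  have hIrnn : 0 ≤ Ir := integral_nonneg fun x => Real.rpow_nonneg (h10 x) r
  -- Hölder
  haveI : IsFiniteMeasure (volume.restrict Ω) :=
    ⟨by rwa [Measure.restrict_apply_univ]⟩
  have holder : I1 ≤ Ir ^ (1/r) * vol ^ (1 / (r / (r-1))) := by
    have h := integral_mul_le_Lp_mul_Lq_of_nonneg (μ := volume.restrict Ω) hpq
      (f := u₁) (g := fun _ => (1:ℝ))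
      (Filter.Eventually.of_forall h10) (Filter.Eventually.of_forall fun _ => zero_le_one)
      h1r (memLp_const 1)
    simpa [Real.one_rpow, hvol, Measure.restrict_apply_univ, Measure.real] using h
  have hH : kzero vol r ^ (-r) * I1 ^ r ≤ Ir := by
    have hpow : I1 ^ r ≤ Ir * kzero vol r ^ r := by
      calc I1 ^ r ≤ (Ir ^ (1/r) * kzero vol r) ^ r :=
            Real.rpow_le_rpow hI1nn holder hr0.le
        _ = Ir * kzero vol r ^ r := by
            rw [Real.mul_rpow (Real.rpow_nonneg hIrnn _) hk.le,
              ← Real.rpow_mul hIrnn, one_div_mul_cancel hr0.ne', Real.rpow_one]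
    have hkr : (0:ℝ) < kzero vol r ^ (-r) := Real.rpow_pos_of_pos hk _
    have hmul : kzero vol r ^ (-r) * kzero vol r ^ r = 1 := by
      rw [← Real.rpow_add hk]; simp
    calc kzero vol r ^ (-r) * I1 ^ r ≤ kzero vol r ^ (-r) * (Ir * kzero vol r ^ r) :=
          by nlinarith
      _ = Ir := by rw [← mul_assoc, mul_comm (kzero vol r ^ (-r)) Ir, mul_assoc, hmul, mul_one]
  -- Young
  have hY : I1 ≤ ε * I1 ^ r + Ceps r ε := young_aux hr hε hI1nn
  -- conclude
  set K := kzero vol r ^ (-r) with hK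
  have hKpos : 0 < K := Real.rpow_pos_of_pos hk _
  have main : (1 + τ * Aeps α β r vol ε) * I1 - τ * Beps α β r vol ε ≤ ∫ x in Ω, u₀ x := by
    have expand : (1 + τ * Aeps α β r vol ε) * I1 - τ * Beps α β r vol ε
        = I1 + τ * (β * (K * ε⁻¹ * (I1 - Ceps r ε)) - α * I1) := by
      simp only [Aeps, Beps, hK]; ring
    have step : K * ε⁻¹ * (I1 - Ceps r ε) ≤ Ir := by
      have h1 : ε⁻¹ * (I1 - Ceps r ε) ≤ I1 ^ r := by
        rw [inv_mul_le_iff₀ hε, mul_comm]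
        linarith
      calc K * ε⁻¹ * (I1 - Ceps r ε) = K * (ε⁻¹ * (I1 - Ceps r ε)) := by ring
        _ ≤ K * I1 ^ r := by nlinarith
        _ ≤ Ir := hH
    calc (1 + τ * Aeps α β r vol ε) * I1 - τ * Beps α β r vol ε
        = I1 + τ * (β * (K * ε⁻¹ * (I1 - Ceps r ε)) - α * I1) := expand
      _ ≤ I1 + τ * (β * Ir - α * I1) := by nlinarith [mul_le_mul_of_nonneg_left step (mul_nonneg hτ.le hβ.le)]
      _ ≤ _ := hineq
  refine ⟨main, fun hpos => ?_⟩
  rw [le_div_iff₀ hpos]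
  linarith [main]
end

section
/- Let τ, M, c, η, a₀ > 0 satisfy (1+τM)(1/a₀ − cτ) ≥ 1/a₀ and (1+τM)(1/η − cτ) ≥ 1/η. Let (a_k)_{k≥0} be a sequence of positive real numbers with a_0 = a₀ such that, for every k ≥ 0, if a_{k+1} > η then 1/a_{k+1} ≥ (1+τM)(1/a_k − cτ). Then a_k ≤ max(η, a₀) for every k ≥ 0. -/
open Real

/-- the inductive core of the uniform `L^∞` bound for the splitting JKO
scheme: under `(1+τM)(1/a₀ − cτ) ≥ 1/a₀` and `(1+τM)(1/η − cτ) ≥ 1/η`, any positive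
sequence starting at `a₀` such that `a_{k+1} > η` implies
`1/a_{k+1} ≥ (1+τM)(1/a_k − cτ)` stays below `max(η, a₀)`. -/
theorem stmt14 (τ M c η a₀ : ℝ) (hτ : 0 < τ) (hM : 0 < M) (hc : 0 < c) (hη : 0 < η)
    (ha₀ : 0 < a₀)
    (h1 : 1 / a₀ ≤ (1 + τ * M) * (1 / a₀ - c * τ))
    (h2 : 1 / η ≤ (1 + τ * M) * (1 / η - c * τ))
    (a : ℕ → ℝ) (hapos : ∀ k, 0 < a k) (ha0 : a 0 = a₀)
    (hstep : ∀ k, η < a (k + 1) → (1 + τ * M) * (1 / a k - c * τ) ≤ 1 / a (k + 1)) :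
    ∀ k, a k ≤ max η a₀ := by
  intro k
  induction k with
  | zero => rw [ha0]; exact le_max_right _ _
  | succ k ih =>
    by_cases h : a (k + 1) ≤ η
    · exact h.trans (le_max_left _ _)
    · push_neg at h
      have hs := hstep k h
      set m := max η a₀ with hm
      have hmpos : 0 < m := lt_max_of_lt_left hη
      have hmb : 1 / m ≤ (1 + τ * M) * (1 / m - c * τ) := by
        rcases max_cases η a₀ with ⟨he, _⟩ | ⟨he, _⟩ <;> rw [hm, he] <;> assumption
      have h1m : 1 / m ≤ 1 / a k := one_div_le_one_div_of_le (hapos k) ih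
      have hmono : (1 + τ * M) * (1 / m - c * τ) ≤ (1 + τ * M) * (1 / a k - c * τ) := by
        apply mul_le_mul_of_nonneg_left (by linarith) (by nlinarith)
      have hfin : 1 / m ≤ 1 / a (k + 1) := hmb.trans (hmono.trans hs)
      rw [div_le_div_iff₀ hmpos (hapos (k+1))] at hfin
      linarith
end

section
/- Let Ω ⊂ ℝ^d be a bounded domain with Lebesgue measure, let F satisfy (A1)–(A2), let τ > 0 and C₁ > 0, and set k₀ = sup_{z∈[0,C₁]} |F'(z)|. Let u, v : Ω → [0,∞) be measurable with 0 ≤ v ≤ C₁ a.e. and √v − √u = −(τ/2) √v F'(v) a.e. on Ω. Then the pointwise sandwich estimates u ≥ (1 − ατ) v and v ≥ (1 − 2k₀τ) u hold a.e. on Ω. -/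
open Real Set MeasureTheory

/-- pointwise sandwich estimates for the Fisher–Rao step:
`u ≥ (1 − ατ)v` and `v ≥ (1 − 2k₀τ)u` a.e. on `Ω`, where
`k₀ = sup_{z∈[0,C₁]} |F'(z)|`. -/
theorem stmt16 (d : ℕ) (Ω : Set (Fin d → ℝ)) (hΩo : IsOpen Ω) (hΩb : Bornology.IsBounded Ω)
    (F : ℝ → ℝ) (α β r : ℝ) (hα : 0 ≤ α) (hβ : 0 < β) (hr : 1 < r)
    (hF1 : ContDiffOn ℝ 1 F (Set.Ici 0)) (hF2 : ContDiffOn ℝ 2 F (Set.Ioi 0))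
    (hF'' : ∀ s : ℝ, 0 < s → 0 < deriv (deriv F) s)
    (hFlow : ∀ s : ℝ, 0 < s → β * s ^ (r - 1) - α ≤ deriv F s)
    (τ C₁ : ℝ) (hτ : 0 < τ) (hC₁ : 0 < C₁)
    (u v : (Fin d → ℝ) → ℝ) (hum : Measurable u) (hvm : Measurable v)
    (hu0 : ∀ x, 0 ≤ u x)
    (hv : ∀ᵐ x ∂(volume.restrict Ω), 0 ≤ v x ∧ v x ≤ C₁)
    (hEL : ∀ᵐ x ∂(volume.restrict Ω),
      Real.sqrt (v x) - Real.sqrt (u x) = -(τ / 2) * (Real.sqrt (v x) * deriv F (v x))) :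
    ∀ᵐ x ∂(volume.restrict Ω),
      (1 - α * τ) * v x ≤ u x ∧
      (1 - 2 * sSup ((fun z => |deriv F z|) '' Set.Icc 0 C₁) * τ) * u x ≤ v x := by

  set k := sSup ((fun z => |deriv F z|) '' Set.Icc 0 C₁) with hk
  have hUD : UniqueDiffOn ℝ (Set.Ici (0:ℝ)) := uniqueDiffOn_Ici 0
  have hcont : ContinuousOn (derivWithin F (Set.Ici 0)) (Set.Ici 0) :=
    hF1.continuousOn_derivWithin hUD le_rfl
  have hbdd : BddAbove ((fun z => |deriv F z|) '' Set.Icc 0 C₁) := by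
    obtain ⟨M, hM⟩ := isCompact_Icc.bddAbove_image
      ((hcont.mono (Set.Icc_subset_Ici_self)).abs :
        ContinuousOn (fun z => |derivWithin F (Set.Ici 0) z|) (Set.Icc 0 C₁))
    refine ⟨max M (|deriv F 0|), ?_⟩
    rintro y ⟨z, hz, rfl⟩
    rcases eq_or_lt_of_le hz.1 with h0 | h0
    · rw [← h0]; exact le_max_right _ _
    · have hder : derivWithin F (Set.Ici 0) z = deriv F z :=
        derivWithin_of_mem_nhds (Ici_mem_nhds h0)
      calc |deriv F z| = |derivWithin F (Set.Ici 0) z| := by rw [hder]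
        _ ≤ M := hM ⟨z, hz, rfl⟩
        _ ≤ max M (|deriv F 0|) := le_max_left _ _
  have hk0 : 0 ≤ k := le_trans (abs_nonneg _)
    (le_csSup hbdd ⟨0, ⟨le_rfl, hC₁.le⟩, rfl⟩)
  have hkb : ∀ z ∈ Set.Icc (0:ℝ) C₁, |deriv F z| ≤ k :=
    fun z hz => le_csSup hbdd ⟨z, hz, rfl⟩
  filter_upwards [hv, hEL] with x hx hel
  obtain ⟨hv0, hvC⟩ := hx
  have hsu : Real.sqrt (u x) = Real.sqrt (v x) * (1 + τ/2 * deriv F (v x)) := by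
    linear_combination -hel
  have hu_eq : u x = v x * (1 + τ/2 * deriv F (v x))^2 := by
    have h1 : u x = Real.sqrt (u x)^2 := (Real.sq_sqrt (hu0 x)).symm
    rw [h1, hsu, mul_pow, Real.sq_sqrt hv0]
  constructor
  · rcases eq_or_lt_of_le hv0 with h0 | h0
    · rw [← h0]; simpa using hu0 x
    · have hF := hFlow (v x) h0
      have hpow : 0 ≤ β * v x ^ (r - 1) :=
        mul_nonneg hβ.le (Real.rpow_nonneg hv0 _)
      have h2t : -(α * τ) ≤ τ * deriv F (v x) := by nlinarith
      nlinarith [mul_nonneg hv0 (sq_nonneg (τ/2 * deriv F (v x))),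
        mul_le_mul_of_nonneg_left h2t hv0]
  · have hc := hkb (v x) ⟨hv0, hvC⟩
    rw [abs_le] at hc
    rcases le_or_gt (1 - 2 * k * τ) 0 with hcase | hcase
    · nlinarith [mul_nonneg (hu0 x) (neg_nonneg.mpr hcase)]
    · have hKτ : 0 ≤ k * τ := mul_nonneg hk0 hτ.le
      have hs1 : τ * deriv F (v x) ≤ τ * k := by nlinarith
      have hs2 : -(τ * k) ≤ τ * deriv F (v x) := by nlinarith
      have hfac : (0:ℝ) ≤ 2 + k*τ/2 + τ/2 * deriv F (v x) := by nlinarith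
      nlinarith [mul_nonneg hv0 (mul_nonneg (mul_nonneg hcase.le
          (by nlinarith : (0:ℝ) ≤ k*τ/2 - τ/2 * deriv F (v x))) hfac),
        mul_nonneg hv0 (mul_nonneg hKτ (mul_nonneg hKτ hKτ)),
        mul_nonneg hv0 (mul_nonneg hKτ hKτ), mul_nonneg hv0 hKτ]
end
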